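/- Let β_k = 2^k B_k / k! and β_{k,p} := (−1)^p (p−1)! Σ_{0 ≤ i ≤ ⌊(p−1)/2⌋} β_{k+p−2i}/(2i+1)!. Then for every integer m ≥ 1 one has β_{0, 2m} = β_{0, 2m+1} = 1/(2m+1). -/

import Mathlib

/-!
With `β(x) = 2x / (e^{2x} - 1)`, the `rescale 2` of the Bernoulli series, `β(x) + x = x coth x`,
i.e. `(β(x) + x) sinh x = x cosh x`. Only odd coefficients of `sinh` are nonzero, so comparing the
coefficients of `x^{2m+1}` gives `∑_{i ≤ m} β_{2m-2i} / (2i+1)! = 1 / (2m)!`; removing the term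
`i = m` evaluates `β_{0,2m}`. In `β_{0,2m+1}` every term vanishes except `β₁ / (2m+1)!`, because
the odd Bernoulli numbers beyond `B₁` are zero.
-/

/-- `β_k = 2^k B_k / k!`, where `B_k` is the k-th Bernoulli number (with `B₁ = −1/2`). -/
noncomputable def smallBeta (k : ℕ) : ℚ := 2 ^ k * bernoulli k / (Nat.factorial k)

/-- `β_{k,p} = (−1)^p (p−1)! Σ_{0 ≤ i ≤ ⌊(p−1)/2⌋} β_{k+p−2i}/(2i+1)!`. -/
noncomputable def betaKP (k p : ℕ) : ℚ :=
  (-1) ^ p * (Nat.factorial (p - 1)) *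
    ∑ i ∈ Finset.range ((p - 1) / 2 + 1),
      smallBeta (k + p - 2 * i) / (Nat.factorial (2 * i + 1))

open PowerSeries Finset
open scoped Nat

theorem Finset.sum_range_two_mul_eq_sum_even_add_sum_odd {M : Type*} [AddCommMonoid M]
    (f : ℕ → M) (n : ℕ) :
    ∑ k ∈ range (2 * n), f k = ∑ i ∈ range n, f (2 * i) + ∑ i ∈ range n, f (2 * i + 1) := by
  induction n with
  | zero => simp
  | succ n ih =>
    rw [mul_add, mul_one, sum_range_succ, sum_range_succ, ih, sum_range_succ, sum_range_succ]
    abel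

noncomputable def betaSeries : ℚ⟦X⟧ := mk smallBeta

theorem betaSeries_eq_rescale_bernoulliPowerSeries :
    betaSeries = rescale 2 (bernoulliPowerSeries ℚ) := by
  ext n
  simp [betaSeries, coeff_rescale, bernoulliPowerSeries, smallBeta, div_eq_mul_inv, mul_assoc]

theorem betaSeries_mul_exp_sq_sub_one : betaSeries * (exp ℚ ^ 2 - 1) = 2 * X := by
  have h := congrArg (rescale (2 : ℚ)) (bernoulliPowerSeries_mul_exp_sub_one ℚ)
  rw [map_mul, map_sub, map_one, rescale_X] at h
  rw [betaSeries_eq_rescale_bernoulliPowerSeries, exp_pow_eq_rescale_exp]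
  norm_num at h ⊢
  rw [h]
  simp [← map_ofNat (C (R := ℚ)) 2]

theorem betaSeries_add_X_mul_exp_sub_exp_neg :
    (betaSeries + X) * (exp ℚ - evalNegHom (exp ℚ)) = X * (exp ℚ + evalNegHom (exp ℚ)) := by
  linear_combination evalNegHom (exp ℚ) * betaSeries_mul_exp_sq_sub_one -
    betaSeries * exp ℚ * exp_mul_exp_neg_eq_one (A := ℚ)

theorem coeff_evalNegHom_exp (n : ℕ) :
    coeff n (evalNegHom (exp ℚ)) = (-1) ^ n / (n ! : ℚ) := by
  rw [evalNegHom, coeff_rescale, coeff_exp]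
  simp [div_eq_mul_inv]

theorem coeff_exp_sub_evalNegHom_exp (n : ℕ) :
    coeff n (exp ℚ - evalNegHom (exp ℚ)) = (1 - (-1) ^ n) / (n ! : ℚ) := by
  rw [map_sub, coeff_exp, coeff_evalNegHom_exp]
  simp [div_eq_mul_inv]
  ring

theorem coeff_exp_add_evalNegHom_exp (n : ℕ) :
    coeff n (exp ℚ + evalNegHom (exp ℚ)) = (1 + (-1) ^ n) / (n ! : ℚ) := by
  rw [map_add, coeff_exp, coeff_evalNegHom_exp]
  simp [div_eq_mul_inv]
  ring

theorem coeff_two_mul_exp_sub_evalNegHom_exp (i : ℕ) :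
    coeff (2 * i) (exp ℚ - evalNegHom (exp ℚ)) = 0 := by
  simp [coeff_exp_sub_evalNegHom_exp, pow_mul]

theorem coeff_two_mul_add_one_exp_sub_evalNegHom_exp (i : ℕ) :
    coeff (2 * i + 1) (exp ℚ - evalNegHom (exp ℚ)) = 2 / ((2 * i + 1)! : ℚ) := by
  rw [coeff_exp_sub_evalNegHom_exp, (odd_two_mul_add_one i).neg_one_pow]
  norm_num

theorem coeff_two_mul_exp_add_evalNegHom_exp (i : ℕ) :
    coeff (2 * i) (exp ℚ + evalNegHom (exp ℚ)) = 2 / ((2 * i)! : ℚ) := by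
  rw [coeff_exp_add_evalNegHom_exp, (even_two_mul i).neg_one_pow]
  norm_num

theorem sum_smallBeta_div_factorial (m : ℕ) :
    ∑ i ∈ range (m + 1), smallBeta (2 * m - 2 * i) / ((2 * i + 1)! : ℚ) = 1 / (2 * m)! := by
  have h := congrArg (coeff (2 * m + 1)) betaSeries_add_X_mul_exp_sub_exp_neg
  rw [coeff_succ_X_mul, coeff_two_mul_exp_add_evalNegHom_exp, mul_comm (betaSeries + X),
    coeff_mul, Nat.sum_antidiagonal_eq_sum_range_succ (fun i j => coeff i _ * coeff j _),
    show (2 * m + 1).succ = 2 * (m + 1) by omega, sum_range_two_mul_eq_sum_even_add_sum_odd] at h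
  simp only [coeff_two_mul_exp_sub_evalNegHom_exp, coeff_two_mul_add_one_exp_sub_evalNegHom_exp,
    zero_mul, sum_const_zero, zero_add] at h
  rw [← mul_right_inj' (two_ne_zero (α := ℚ)), mul_sum, mul_one_div, ← h]
  refine sum_congr rfl fun i hi => ?_
  have hi : i ≤ m := Nat.lt_succ_iff.mp (mem_range.mp hi)
  rw [show 2 * m + 1 - (2 * i + 1) = 2 * m - 2 * i by omega, map_add, coeff_X,
    if_neg (by omega), add_zero, betaSeries, coeff_mk]
  ring

theorem smallBeta_zero : smallBeta 0 = 1 := by simp [smallBeta]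

theorem smallBeta_one : smallBeta 1 = -1 := by
  norm_num [smallBeta, bernoulli_one]

theorem smallBeta_eq_zero_of_odd {n : ℕ} (hn : Odd n) (h1 : 1 < n) : smallBeta n = 0 := by
  rw [smallBeta, bernoulli_eq_bernoulli'_of_ne_one h1.ne', bernoulli'_eq_zero_of_odd hn h1,
    mul_zero, zero_div]

theorem betaKP_zero_two_mul {m : ℕ} (hm : 1 ≤ m) : betaKP 0 (2 * m) = 1 / (2 * m + 1) := by
  obtain ⟨n, rfl⟩ : ∃ n, m = n + 1 := ⟨m - 1, by omega⟩
  have hsum := sum_smallBeta_div_factorial (n + 1)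
  rw [sum_range_succ, Nat.sub_self, smallBeta_zero, ← eq_sub_iff_add_eq] at hsum
  rw [betaKP, show (2 * (n + 1) - 1) / 2 + 1 = n + 1 by omega, (even_two_mul _).neg_one_pow,
    show 2 * (n + 1) - 1 = 2 * n + 1 by omega]
  simp only [zero_add]
  rw [hsum, show 2 * (n + 1) = 2 * n + 1 + 1 by ring]
  simp only [Nat.factorial_succ]
  push_cast
  field_simp
  ring

theorem betaKP_zero_two_mul_add_one (m : ℕ) : betaKP 0 (2 * m + 1) = 1 / (2 * m + 1) := by
  have hsum : ∑ i ∈ range (m + 1), smallBeta (0 + (2 * m + 1) - 2 * i) / ((2 * i + 1)! : ℚ)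
      = smallBeta 1 / (2 * m + 1)! := by
    rw [sum_range_succ, show 0 + (2 * m + 1) - 2 * m = 1 by omega, add_eq_right]
    refine sum_eq_zero fun i hi => ?_
    have hi : i < m := mem_range.mp hi
    rw [smallBeta_eq_zero_of_odd ⟨m - i, by omega⟩ (by omega), zero_div]
  rw [betaKP, Nat.add_sub_cancel, show 2 * m / 2 + 1 = m + 1 by omega, hsum, smallBeta_one,
    (odd_two_mul_add_one m).neg_one_pow, Nat.factorial_succ]
  push_cast
  field_simp

theorem statement_10 (m : ℕ) (hm : 1 ≤ m) :
    betaKP 0 (2 * m) = 1 / (2 * (m : ℚ) + 1) ∧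
    betaKP 0 (2 * m + 1) = 1 / (2 * (m : ℚ) + 1) :=
  ⟨betaKP_zero_two_mul hm, betaKP_zero_two_mul_add_one m⟩
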